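/- Let γ ∈ [0,1]. For every pair (ρ₀, ρ₁) of qubit density matrices and every two-outcome POVM (Λ₀, Λ₁) on ℂ², the average success probability satisfies (1/2)·Re Tr(Λ₀ · N_γ(ρ₀)) + (1/2)·Re Tr(Λ₁ · N_γ(ρ₁)) ≤ (1 + √(1−γ))/2. -/

import Mathlib

/-!
Since `Λ₁ = 1 - Λ₀` and the channel is linear and trace preserving, the success probability is
`1/2 + 1/2 Re Tr(Λ₀ X)` with `X = N_γ(ρ₀ - ρ₁)` Hermitian and traceless. For `0 ≤ Λ₀ ≤ 1` the
quantity `Re Tr(Λ₀ X)` is at most the positive eigenvalue `√(X₀₀² + |X₀₁|²)` of `X` (Cauchy–Schwarz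
on the Bloch coordinates). The channel multiplies the Bloch coordinates of a traceless matrix by
`1 - γ` and `√(1 - γ)`, and the Bloch vectors of two states are at distance at most `2`, which
bounds that eigenvalue by `√(1 - γ)`.
-/

open Matrix Complex
open scoped ComplexOrder

/-- Kraus operator `K₀` of the qubit amplitude damping channel. -/
noncomputable def K₀ (γ : ℝ) : Matrix (Fin 2) (Fin 2) ℂ :=
  !![1, 0; 0, (Real.sqrt (1 - γ) : ℂ)]

/-- Kraus operator `K₁` of the qubit amplitude damping channel. -/
noncomputable def K₁ (γ : ℝ) : Matrix (Fin 2) (Fin 2) ℂ :=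
  !![0, (Real.sqrt γ : ℂ); 0, 0]

/-- The qubit amplitude damping channel with damping parameter `γ`. -/
noncomputable def ADC (γ : ℝ) (ρ : Matrix (Fin 2) (Fin 2) ℂ) : Matrix (Fin 2) (Fin 2) ℂ :=
  K₀ γ * ρ * (K₀ γ)ᴴ + K₁ γ * ρ * (K₁ γ)ᴴ

/-- The state `ρ₊ = |+⟩⟨+|`. -/
noncomputable def ρPlus : Matrix (Fin 2) (Fin 2) ℂ := (1/2 : ℂ) • !![1, 1; 1, 1]

/-- The state `ρ₋ = |−⟩⟨−|`. -/
noncomputable def ρMinus : Matrix (Fin 2) (Fin 2) ℂ := (1/2 : ℂ) • !![1, -1; -1, 1]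

open ComplexConjugate

lemma sq_sub_add_sq_add_le_one {a₀ a₁ r₀ r₁ : ℝ} (h₀ : r₀ ^ 2 ≤ a₀ * (1 - a₀))
    (h₁ : r₁ ^ 2 ≤ a₁ * (1 - a₁)) :
    (a₀ - a₁) ^ 2 + (r₀ + r₁) ^ 2 ≤ 1 := by
  have ha₀ : 0 ≤ a₀ ∧ a₀ ≤ 1 := by constructor <;> nlinarith [sq_nonneg r₀]
  have ha₁ : 0 ≤ a₁ ∧ a₁ ≤ 1 := by constructor <;> nlinarith [sq_nonneg r₁]
  have hsum : 0 ≤ a₀ * a₁ + (1 - a₀) * (1 - a₁) := by nlinarith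
  -- AM-GM: `2 r₀ r₁ ≤ 2 √(a₀ a₁ (1 - a₀)(1 - a₁)) ≤ a₀ a₁ + (1 - a₀)(1 - a₁)`
  have hamgm : 2 * r₀ * r₁ ≤ a₀ * a₁ + (1 - a₀) * (1 - a₁) := by
    refine (abs_le_of_sq_le_sq' ?_ hsum).2
    nlinarith [mul_le_mul h₀ h₁ (sq_nonneg _) ((sq_nonneg r₀).trans h₀),
      sq_nonneg (a₀ * a₁ - (1 - a₀) * (1 - a₁))]
  nlinarith

namespace Matrix

lemma IsHermitian.im_apply_self {n : Type*} {M : Matrix n n ℂ} (h : M.IsHermitian) (i : n) :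
    (M i i).im = 0 := by
  have := congrArg Complex.im (h.apply i i)
  simp only [star_def, conj_im] at this
  linarith

lemma IsHermitian.apply_one_zero {M : Matrix (Fin 2) (Fin 2) ℂ} (h : M.IsHermitian) :
    M 1 0 = conj (M 0 1) :=
  (h.apply 1 0).symm

lemma IsHermitian.re_trace_mul_fin_two {A B : Matrix (Fin 2) (Fin 2) ℂ}
    (hA : A.IsHermitian) (hB : B.IsHermitian) :
    (A * B).trace.re = (A 0 0).re * (B 0 0).re + (A 1 1).re * (B 1 1).re
      + 2 * ((A 0 1).re * (B 0 1).re + (A 0 1).im * (B 0 1).im) := by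
  simp only [trace_fin_two, mul_apply, Fin.sum_univ_two, hA.apply_one_zero, hB.apply_one_zero,
    add_re, mul_re, conj_re, conj_im, hA.im_apply_self, hB.im_apply_self]
  ring

lemma PosSemidef.re_apply_self_nonneg {n : Type*} [Fintype n] {M : Matrix n n ℂ}
    (h : M.PosSemidef) (i : n) : 0 ≤ (M i i).re :=
  (Complex.nonneg_iff.mp h.diag_nonneg).1

lemma PosSemidef.sq_norm_apply_zero_one_le {M : Matrix (Fin 2) (Fin 2) ℂ} (h : M.PosSemidef) :
    ‖M 0 1‖ ^ 2 ≤ (M 0 0).re * (M 1 1).re := by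
  have hdet := (Complex.nonneg_iff.mp h.det_nonneg).1
  rw [det_fin_two, h.isHermitian.apply_one_zero, Complex.mul_conj,
    Complex.normSq_eq_norm_sq] at hdet
  simp only [sub_re, mul_re, h.isHermitian.im_apply_self, mul_zero, sub_zero, ofReal_re] at hdet
  linarith

variable {Λ ρ X : Matrix (Fin 2) (Fin 2) ℂ}

lemma PosSemidef.sq_sub_add_four_mul_sq_norm_le_one (hΛ : Λ.PosSemidef)
    (hΛ' : (1 - Λ).PosSemidef) :
    ((Λ 0 0).re - (Λ 1 1).re) ^ 2 + 4 * ‖Λ 0 1‖ ^ 2 ≤ 1 := by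
  have h₀ := hΛ.sq_norm_apply_zero_one_le
  have h₁ := hΛ'.sq_norm_apply_zero_one_le
  have hp := hΛ'.re_apply_self_nonneg 0
  have hq := hΛ'.re_apply_self_nonneg 1
  simp only [sub_apply, one_apply_eq, one_apply_ne zero_ne_one, zero_sub, norm_neg, sub_re,
    one_re] at h₁ hp hq
  -- with `p, q = Λ₀₀, Λ₁₁`: `(p - q)² + 4pq = (p + q)²`, `(p - q)² + 4(1 - p)(1 - q) = (2 - p - q)²`
  rcases le_total ((Λ 0 0).re + (Λ 1 1).re) 1 with h | h
  · nlinarith [hΛ.re_apply_self_nonneg 0, hΛ.re_apply_self_nonneg 1]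
  · nlinarith

theorem re_trace_mul_le_sqrt_of_trace_eq_zero (hΛ : Λ.PosSemidef) (hΛ' : (1 - Λ).PosSemidef)
    (hX : X.IsHermitian) (hX₀ : X.trace = 0) :
    (Λ * X).trace.re ≤ √((X 0 0).re ^ 2 + ‖X 0 1‖ ^ 2) := by
  have hX₁₁ : (X 1 1).re = -(X 0 0).re := by
    have := congrArg Complex.re hX₀
    rw [trace_fin_two, add_re, zero_re] at this
    linarith
  have hΛ₀₁ := Complex.sq_norm_sub_sq_re (Λ 0 1)
  have hX₀₁ := Complex.sq_norm_sub_sq_re (X 0 1)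
  have hΛb := hΛ.sq_sub_add_four_mul_sq_norm_le_one hΛ'
  rw [hΛ.isHermitian.re_trace_mul_fin_two hX, hX₁₁]
  refine (le_abs_self _).trans (Real.abs_le_sqrt ?_)
  -- Cauchy–Schwarz for `(p - q, 2 Λ₀₁)` and `(X₀₀, X₀₁)` in `ℝ³`, then `hΛb`
  nlinarith [sq_nonneg (((Λ 0 0).re - (Λ 1 1).re) * (X 0 1).re - 2 * (Λ 0 1).re * (X 0 0).re),
    sq_nonneg (((Λ 0 0).re - (Λ 1 1).re) * (X 0 1).im - 2 * (Λ 0 1).im * (X 0 0).re),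
    sq_nonneg ((Λ 0 1).re * (X 0 1).im - (Λ 0 1).im * (X 0 1).re),
    mul_nonneg (sub_nonneg.mpr hΛb) (add_nonneg (sq_nonneg (X 0 0).re) (sq_nonneg ‖X 0 1‖))]

lemma re_apply_one_one_of_trace_eq_one (hρ : ρ.trace = 1) : (ρ 1 1).re = 1 - (ρ 0 0).re := by
  have := congrArg Complex.re hρ
  rw [trace_fin_two, add_re, one_re] at this
  linarith

lemma sq_re_sub_add_sq_norm_sub_le_one {ρ₀ ρ₁ : Matrix (Fin 2) (Fin 2) ℂ}
    (hρ₀ : ρ₀.PosSemidef) (hρ₀t : ρ₀.trace = 1) (hρ₁ : ρ₁.PosSemidef) (hρ₁t : ρ₁.trace = 1) :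
    ((ρ₀ - ρ₁) 0 0).re ^ 2 + ‖(ρ₀ - ρ₁) 0 1‖ ^ 2 ≤ 1 := by
  have h₀ := hρ₀.sq_norm_apply_zero_one_le
  have h₁ := hρ₁.sq_norm_apply_zero_one_le
  rw [re_apply_one_one_of_trace_eq_one hρ₀t] at h₀
  rw [re_apply_one_one_of_trace_eq_one hρ₁t] at h₁
  have hnorm : ‖(ρ₀ - ρ₁) 0 1‖ ≤ ‖ρ₀ 0 1‖ + ‖ρ₁ 0 1‖ := norm_sub_le _ _
  have := sq_sub_add_sq_add_le_one h₀ h₁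
  rw [sub_apply, sub_re]
  nlinarith [pow_le_pow_left₀ (norm_nonneg _) hnorm 2]

end Matrix

lemma conjTranspose_K₀ (γ : ℝ) : (K₀ γ)ᴴ = K₀ γ := by
  ext i j
  fin_cases i <;> fin_cases j <;> simp [K₀]

lemma conjTranspose_K₁ (γ : ℝ) : (K₁ γ)ᴴ = !![0, 0; (√γ : ℂ), 0] := by
  ext i j
  fin_cases i <;> fin_cases j <;> simp [K₁]

lemma ADC_eq {γ : ℝ} (hγ₀ : 0 ≤ γ) (hγ₁ : γ ≤ 1) (X : Matrix (Fin 2) (Fin 2) ℂ) :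
    ADC γ X = !![X 0 0 + γ * X 1 1, √(1 - γ) * X 0 1; √(1 - γ) * X 1 0, (1 - γ) * X 1 1] := by
  have hs : ((√(1 - γ) : ℝ) : ℂ) * (√(1 - γ) : ℝ) = 1 - γ := by
    rw [← ofReal_mul, Real.mul_self_sqrt (sub_nonneg.mpr hγ₁), ofReal_sub, ofReal_one]
  have hg : ((√γ : ℝ) : ℂ) * (√γ : ℝ) = γ := by
    rw [← ofReal_mul, Real.mul_self_sqrt hγ₀]
  rw [ADC, conjTranspose_K₀, conjTranspose_K₁, K₀, K₁, eta_fin_two X]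
  ext i j
  fin_cases i <;> fin_cases j <;> simp
  · linear_combination X 1 1 * hg
  · ring
  · linear_combination X 1 1 * hs

lemma ADC_sub (γ : ℝ) (X Y : Matrix (Fin 2) (Fin 2) ℂ) : ADC γ (X - Y) = ADC γ X - ADC γ Y := by
  simp only [ADC, mul_sub, sub_mul]
  abel

lemma Matrix.IsHermitian.ADC {X : Matrix (Fin 2) (Fin 2) ℂ} (hX : X.IsHermitian) (γ : ℝ) :
    (ADC γ X).IsHermitian := by
  simp only [IsHermitian, _root_.ADC, conjTranspose_add, conjTranspose_mul,
    conjTranspose_conjTranspose, hX.eq, mul_assoc]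

lemma trace_ADC {γ : ℝ} (hγ₀ : 0 ≤ γ) (hγ₁ : γ ≤ 1) (X : Matrix (Fin 2) (Fin 2) ℂ) :
    (ADC γ X).trace = X.trace := by
  rw [ADC_eq hγ₀ hγ₁, trace_fin_two_of, trace_fin_two]
  ring

lemma sq_re_add_sq_norm_ADC_le {γ : ℝ} (hγ₀ : 0 ≤ γ) (hγ₁ : γ ≤ 1) {X : Matrix (Fin 2) (Fin 2) ℂ}
    (hX : X.trace = 0) :
    ((ADC γ X) 0 0).re ^ 2 + ‖(ADC γ X) 0 1‖ ^ 2 ≤ (1 - γ) * ((X 0 0).re ^ 2 + ‖X 0 1‖ ^ 2) := by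
  have hX₁₁ : X 1 1 = -X 0 0 := by rw [trace_fin_two] at hX; linear_combination hX
  simp only [ADC_eq hγ₀ hγ₁, of_apply, cons_val', cons_val_zero, cons_val_one, empty_val',
    cons_val_fin_one, hX₁₁, norm_mul, Complex.norm_real, Real.norm_eq_abs, mul_pow, sq_abs,
    Real.sq_sqrt (sub_nonneg.mpr hγ₁), add_re, re_ofReal_mul, neg_re]
  nlinarith [mul_nonneg (mul_nonneg hγ₀ (sub_nonneg.mpr hγ₁)) (sq_nonneg (X 0 0).re)]

/-- For `γ ∈ [0,1]`, every pair of qubit density matrices and every two-outcome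
POVM on `ℂ²` has average success probability at most `(1 + √(1−γ))/2` over the ADC. -/
theorem stmt1 (γ : ℝ) (hγ0 : 0 ≤ γ) (hγ1 : γ ≤ 1)
    (ρ₀ ρ₁ Λ₀ Λ₁ : Matrix (Fin 2) (Fin 2) ℂ)
    (hρ₀ : ρ₀.PosSemidef) (hρ₀t : ρ₀.trace = 1)
    (hρ₁ : ρ₁.PosSemidef) (hρ₁t : ρ₁.trace = 1)
    (hΛ₀ : Λ₀.PosSemidef) (hΛ₁ : Λ₁.PosSemidef) (hΛ : Λ₀ + Λ₁ = 1) :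
    (1/2) * (Λ₀ * ADC γ ρ₀).trace.re + (1/2) * (Λ₁ * ADC γ ρ₁).trace.re
      ≤ (1 + Real.sqrt (1 - γ)) / 2 := by
  obtain rfl : Λ₁ = 1 - Λ₀ := eq_sub_of_add_eq' hΛ
  have hΔ : (ρ₀ - ρ₁).trace = 0 := by rw [trace_sub, hρ₀t, hρ₁t, sub_self]
  set X := ADC γ (ρ₀ - ρ₁)
  have hsplit : (1/2) * (Λ₀ * ADC γ ρ₀).trace.re + (1/2) * ((1 - Λ₀) * ADC γ ρ₁).trace.re
      = 1/2 + (1/2) * (Λ₀ * X).trace.re := by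
    rw [show X = ADC γ ρ₀ - ADC γ ρ₁ from ADC_sub γ ρ₀ ρ₁, mul_sub, sub_mul, one_mul,
      trace_sub, trace_sub, trace_ADC hγ0 hγ1, hρ₁t, sub_re, sub_re, one_re]
    ring
  have hbound : (Λ₀ * X).trace.re ≤ √(1 - γ) :=
    calc (Λ₀ * X).trace.re ≤ √((X 0 0).re ^ 2 + ‖X 0 1‖ ^ 2) :=
          re_trace_mul_le_sqrt_of_trace_eq_zero hΛ₀ hΛ₁ ((hρ₀.1.sub hρ₁.1).ADC γ)
            ((trace_ADC hγ0 hγ1 _).trans hΔ)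
      _ ≤ √((1 - γ) * 1) :=
          Real.sqrt_le_sqrt <| (sq_re_add_sq_norm_ADC_le hγ0 hγ1 hΔ).trans <|
            mul_le_mul_of_nonneg_left (sq_re_sub_add_sq_norm_sub_le_one hρ₀ hρ₀t hρ₁ hρ₁t)
              (sub_nonneg.mpr hγ1)
      _ = √(1 - γ) := by rw [mul_one]
  rw [hsplit]
  linarith
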